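/- arXiv:1910.12110 — 5 statements merged into one kernel-verified Lean document; each statement's English description precedes it below -/
import Mathlib

section
/- If G is a 2-self-centered graph and G is edge-maximal among 2-self-centered graphs (i.e., adding any edge between non-adjacent vertices destroys the 2-self-centered property), then every connected component of the complement of G is a tree with at least two vertices. -/
/-!
Adding a complement edge `ab` to a 2-self-centered graph `G` cannot raise any eccentricity, so if
the result is no longer 2-self-centered its radius drops to 1: some vertex `w` becomes adjacent to
everything. Since `w` had eccentricity 2 in `G`, it had a non-neighbour, which can only be `a` or
`b`; hence `w ∈ {a, b}` and `w` is a leaf of `Gᶜ`. A graph in which every edge has a leaf endpoint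
is a forest, and every vertex of `Gᶜ` has a neighbour, so each component has at least two vertices.
-/

open SimpleGraph

variable {V : Type*}

/-- Eccentricity of a vertex: maximum distance to any vertex. -/
noncomputable def ecc (G : SimpleGraph V) [Fintype V] (v : V) : ℕ :=
  Finset.univ.sup fun u => G.dist v u

/-- Diameter: maximum eccentricity. -/
noncomputable def gdiam (G : SimpleGraph V) [Fintype V] : ℕ :=
  Finset.univ.sup fun v => ecc G v

/-- Radius: minimum eccentricity. -/
noncomputable def grad (G : SimpleGraph V) [Fintype V] : ℕ :=
  sInf (Set.range fun v => ecc G v)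

/-- A graph is 2-self-centered if it is connected and diam = rad = 2. -/
def TwoSC (G : SimpleGraph V) [Fintype V] : Prop :=
  G.Connected ∧ gdiam G = 2 ∧ grad G = 2

section Eccentricity

variable [Fintype V] {G H : SimpleGraph V} {u v : V}

lemma dist_le_ecc (G : SimpleGraph V) (v u : V) : G.dist v u ≤ ecc G v :=
  Finset.le_sup (Finset.mem_univ u)

lemma ecc_le_gdiam (G : SimpleGraph V) (v : V) : ecc G v ≤ gdiam G :=
  Finset.le_sup (f := fun v => ecc G v) (Finset.mem_univ v)

lemma grad_le_ecc (G : SimpleGraph V) (v : V) : grad G ≤ ecc G v :=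
  Nat.sInf_le ⟨v, rfl⟩

lemma exists_ecc_eq_grad [Nonempty V] (G : SimpleGraph V) : ∃ v, ecc G v = grad G :=
  Nat.sInf_mem (Set.range_nonempty _)

lemma ecc_anti (hG : G.Connected) (hle : G ≤ H) (v : V) : ecc H v ≤ ecc G v :=
  Finset.sup_le fun u _ => ((hG.preconnected v u).dist_anti hle).trans (dist_le_ecc G v u)

lemma adj_of_ecc_le_one (hG : G.Connected) (h : ecc G v ≤ 1) (hvu : v ≠ u) : G.Adj v u :=
  dist_eq_one_iff_adj.mp <| le_antisymm ((dist_le_ecc G v u).trans h) (hG.pos_dist_of_ne hvu)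

lemma exists_compl_adj_of_two_le_ecc (h : 2 ≤ ecc G v) : ∃ u, Gᶜ.Adj v u := by
  obtain ⟨u, -, hu⟩ := (Finset.le_sup_iff (by decide : (⊥ : ℕ) < 2)).mp h
  refine ⟨u, (compl_adj G v u).mpr ⟨fun hvu => ?_, fun hadj => ?_⟩⟩
  · simp [hvu] at hu
  · simp [dist_eq_one_iff_adj.mpr hadj] at hu

end Eccentricity

namespace TwoSC

variable [Fintype V] {G H : SimpleGraph V} {a b : V}

lemma exists_compl_adj (h : TwoSC G) (v : V) : ∃ u, Gᶜ.Adj v u :=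
  exists_compl_adj_of_two_le_ecc (h.2.2 ▸ grad_le_ecc G v)

lemma exists_forall_adj_of_le (h : TwoSC G) (hle : G ≤ H) (hH : ¬ TwoSC H) :
    ∃ w, ∀ u, w ≠ u → H.Adj w u := by
  obtain ⟨hconn, hdiam, -⟩ := h
  have hconn' : H.Connected := hconn.mono hle
  have hecc : ∀ v, ecc H v ≤ 2 := fun v => (ecc_anti hconn hle v).trans (hdiam ▸ ecc_le_gdiam G v)
  have := hconn.nonempty
  obtain ⟨w, hw⟩ := exists_ecc_eq_grad H
  have hgrad : grad H ≤ 1 := by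
    by_contra! hgrad
    have := ecc_le_gdiam H w
    have : gdiam H ≤ 2 := Finset.sup_le fun v _ => hecc v
    exact hH ⟨hconn', by grind, by grind⟩
  exact ⟨w, fun u hu => adj_of_ecc_le_one hconn' (hw ▸ hgrad) hu⟩

lemma forall_compl_adj_eq_or_forall_compl_adj_eq (h : TwoSC G)
    (hmax : ∀ u v : V, u ≠ v → ¬ G.Adj u v →
      ¬ TwoSC (G ⊔ SimpleGraph.fromEdgeSet {s(u, v)}))
    (hab : Gᶜ.Adj a b) :
    (∀ c, Gᶜ.Adj a c → c = b) ∨ (∀ c, Gᶜ.Adj b c → c = a) := by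
  obtain ⟨hne, hnadj⟩ := (compl_adj G a b).mp hab
  obtain ⟨w, hw⟩ := h.exists_forall_adj_of_le le_sup_left (hmax a b hne hnadj)
  have hw_edge : ∀ c, Gᶜ.Adj w c → s(w, c) = s(a, b) := fun c hc => by
    obtain ⟨hwc, hnwc⟩ := (compl_adj G w c).mp hc
    simpa [hnwc, hwc] using hw c hwc
  obtain ⟨c, hc⟩ := h.exists_compl_adj w
  rcases Sym2.mem_iff.mp (hw_edge c hc ▸ Sym2.mem_mk_left w c) with rfl | rfl
  · exact .inl fun c hc => Sym2.congr_right.mp (hw_edge c hc)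
  · exact .inr fun c hc => Sym2.congr_right.mp ((hw_edge c hc).trans Sym2.eq_swap)

end TwoSC

namespace SimpleGraph

variable {H : SimpleGraph V} {a b : V}

lemma isBridge_of_forall_adj_eq (hab : H.Adj a b) (h : ∀ c, H.Adj a c → c = b) :
    H.IsBridge s(a, b) := by
  rintro ⟨p⟩
  have hnil : ¬ p.Nil := Walk.not_nil_of_ne hab.ne
  have hsnd := Walk.adj_snd hnil
  rw [deleteEdges_adj, h _ hsnd.1] at hsnd
  exact hsnd.2 rfl

lemma isAcyclic_of_forall_adj_leaf
    (h : ∀ a b, H.Adj a b → (∀ c, H.Adj a c → c = b) ∨ (∀ c, H.Adj b c → c = a)) :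
    H.IsAcyclic :=
  isAcyclic_iff_forall_adj_isBridge.mpr fun a b hab => (h a b hab).elim
    (isBridge_of_forall_adj_eq hab) fun hb => Sym2.eq_swap ▸ isBridge_of_forall_adj_eq hab.symm hb

lemma ConnectedComponent.isTree_induce_supp (hH : H.IsAcyclic) (C : H.ConnectedComponent) :
    (H.induce C.supp).IsTree :=
  ⟨C.connected_toSimpleGraph, hH.induce _⟩

lemma ConnectedComponent.two_le_ncard_supp [Finite V] (h : ∀ v, ∃ u, H.Adj v u)
    (C : H.ConnectedComponent) : 2 ≤ C.supp.ncard := by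
  induction C using ConnectedComponent.ind with
  | h v =>
    obtain ⟨u, hvu⟩ := h v
    rw [← Set.ncard_pair hvu.ne]
    refine Set.ncard_le_ncard (Set.pair_subset rfl ?_) (Set.toFinite _)
    exact ConnectedComponent.sound hvu.reachable.symm

end SimpleGraph

/-- If G is edge-maximal 2-self-centered, then every connected component of the complement
is a tree with at least two vertices. -/
theorem stmt_3 [Fintype V] (G : SimpleGraph V)
    (h2sc : TwoSC G)
    (hmax : ∀ u v : V, u ≠ v → ¬ G.Adj u v →
      ¬ TwoSC (G ⊔ SimpleGraph.fromEdgeSet {s(u, v)})) :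
    ∀ C : Gᶜ.ConnectedComponent,
      (Gᶜ.induce C.supp).IsTree ∧ 2 ≤ C.supp.ncard := by
  have hacyclic : Gᶜ.IsAcyclic := isAcyclic_of_forall_adj_leaf fun _ _ hab =>
    h2sc.forall_compl_adj_eq_or_forall_compl_adj_eq hmax hab
  exact fun C => ⟨C.isTree_induce_supp hacyclic, C.two_le_ncard_supp h2sc.exists_compl_adj⟩
end

section
/- A 2-self-centered graph G is edge-maximal (adding any edge between non-adjacent vertices destroys the property of being 2-self-centered) if and only if the complement of G is disconnected and each of its connected components is a star with at least two vertices. -/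
/-! Put `H = Gᶜ`. Since `G` is 2-self-centered, every vertex has an `H`-neighbour. Adding an
edge `uv` of `H` to `G` keeps the graph connected and only shortens distances, so the new graph
fails to be 2-self-centered exactly when some vertex loses its last `H`-neighbour, i.e. when `u`
or `v` is a leaf of `H` whose only neighbour is the other. Thus `G` is edge-maximal iff every edge
of `H` is pendant. A graph without isolated vertices all of whose edges are pendant is a disjoint
union of stars `K_{1,k}` with `k ≥ 1`, and conversely; it cannot be connected, for then the centre
of the single star would be isolated in the connected graph `G`. -/

open SimpleGraph

variable {V : Type*}

section TwoSelfCentered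

variable [Fintype V] {G G' : SimpleGraph V}

lemma ecc_le_iff {v : V} {n : ℕ} : ecc G v ≤ n ↔ ∀ u, G.dist v u ≤ n := by
  simp [ecc]

lemma SimpleGraph.Connected.ecc_le_one_iff (hG : G.Connected) {v : V} :
    ecc G v ≤ 1 ↔ ∀ u, ¬ Gᶜ.Adj v u := by
  refine ecc_le_iff.trans (forall_congr' fun u => ?_)
  rw [compl_adj, not_and_not_right]
  constructor
  · intro h hne
    have := hG.dist_eq_zero_iff.not.2 hne
    exact dist_eq_one_iff_adj.1 (by omega)
  · intro h
    by_cases hne : v = u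
    · simp [hne]
    · exact (dist_eq_one_iff_adj.2 (h hne)).le

lemma twoSC_iff_forall_ecc_eq_two : TwoSC G ↔ G.Connected ∧ ∀ v, ecc G v = 2 := by
  constructor
  · rintro ⟨hc, hd, hr⟩
    refine ⟨hc, fun v => le_antisymm ?_ ?_⟩
    · exact hd ▸ Finset.le_sup (Finset.mem_univ v)
    · exact hr ▸ Nat.sInf_le ⟨v, rfl⟩
  · rintro ⟨hc, he⟩
    have : Nonempty V := hc.nonempty
    have hconst : (fun v => ecc G v) = fun _ => 2 := funext he
    refine ⟨hc, ?_, ?_⟩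
    · rw [gdiam, hconst, Finset.sup_const Finset.univ_nonempty]
    · rw [grad, hconst, Set.range_const, csInf_singleton]

lemma twoSC_iff :
    TwoSC G ↔ G.Connected ∧ (∀ u v, G.dist u v ≤ 2) ∧ ∀ v, ∃ u, Gᶜ.Adj v u := by
  rw [twoSC_iff_forall_ecc_eq_two]
  refine and_congr_right fun hG => ?_
  simp only [← ecc_le_iff, ← forall_and]
  refine forall_congr' fun v => ?_
  have : (∃ u, Gᶜ.Adj v u) ↔ ¬ ecc G v ≤ 1 := by
    rw [hG.ecc_le_one_iff, not_forall_not]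
  rw [this]
  omega

lemma TwoSC.twoSC_iff_of_le (hG : TwoSC G) (hle : G ≤ G') :
    TwoSC G' ↔ ∀ v, ∃ u, G'ᶜ.Adj v u := by
  obtain ⟨hconn, hdist, -⟩ := twoSC_iff.1 hG
  rw [twoSC_iff]
  refine ⟨fun h => h.2.2, fun h => ⟨hconn.mono hle, fun u v => ?_, h⟩⟩
  exact ((hconn.preconnected u v).dist_anti hle).trans (hdist u v)

end TwoSelfCentered

lemma SimpleGraph.compl_sup_fromEdgeSet (G : SimpleGraph V) (s : Set (Sym2 V)) :
    (G ⊔ fromEdgeSet s)ᶜ = Gᶜ.deleteEdges s := by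
  rw [deleteEdges, compl_sup, sdiff_eq]

section Star

variable {W W' : Type*}

def SimpleGraph.IsStarCenter (K : SimpleGraph W) (c : W) : Prop :=
  ∀ x y, K.Adj x y ↔ x ≠ y ∧ (x = c ∨ y = c)

lemma isStarCenter_completeBipartiteGraph (β : Type*) :
    (completeBipartiteGraph (Fin 1) β).IsStarCenter (Sum.inl 0) := by
  rintro (i | j) (i' | j') <;> simp [Fin.fin_one_eq_zero]

lemma SimpleGraph.IsStarCenter.comap_iso {K : SimpleGraph W} {K' : SimpleGraph W'} {c : W'}
    (h : K'.IsStarCenter c) (φ : K ≃g K') : K.IsStarCenter (φ.symm c) := by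
  intro x y
  rw [← φ.map_adj_iff, h, φ.injective.ne_iff, RelIso.eq_symm_apply, RelIso.eq_symm_apply]

lemma SimpleGraph.IsStarCenter.exists_iso [Finite W] [Nontrivial W] {K : SimpleGraph W} {c : W}
    (h : K.IsStarCenter c) :
    ∃ k, 1 ≤ k ∧ Nonempty (K ≃g completeBipartiteGraph (Fin 1) (Fin k)) := by
  classical
  have := Fintype.ofFinite W
  have : Nonempty {x // ¬ x = c} := let ⟨x, hx⟩ := exists_ne c; ⟨⟨x, hx⟩⟩
  let e : Fin 1 ⊕ Fin (Fintype.card {x // ¬ x = c}) ≃ W :=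
    (Equiv.sumCongr (Equiv.ofUnique (Fin 1) {x // x = c}) (Fintype.equivFin _).symm).trans
      (Equiv.sumCompl (· = c))
  refine ⟨_, Fintype.card_pos, ⟨(⟨e, fun {a b} => ?_⟩ : completeBipartiteGraph _ _ ≃g K).symm⟩⟩
  have hcenter (i : Fin 1) : e (.inl i) = c := rfl
  have hleaf (j) : e (.inr j) ≠ c := ((Fintype.equivFin _).symm j).2
  show K.Adj (e a) (e b) ↔ _
  rw [h]
  rcases a with i | j <;> rcases b with i' | j' <;> simp [hcenter, hleaf, (hleaf _).symm]

end Star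

section Pendant

variable {H : SimpleGraph V}

def SimpleGraph.AllEdgesPendant (H : SimpleGraph V) : Prop :=
  ∀ ⦃u v⦄, H.Adj u v → (∀ w, H.Adj u w → w = v) ∨ (∀ w, H.Adj v w → w = u)

lemma forall_exists_adj_deleteEdges_iff (hnbr : ∀ w, ∃ x, H.Adj w x) {u v : V}
    (huv : H.Adj u v) :
    (∀ w, ∃ x, (H.deleteEdges {s(u, v)}).Adj w x) ↔
      ¬ ((∀ w, H.Adj u w → w = v) ∨ (∀ w, H.Adj v w → w = u)) := by
  simp only [deleteEdges_adj, Set.mem_singleton_iff]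
  constructor
  · rintro h (hu | hv)
    · obtain ⟨x, hx, hne⟩ := h u
      exact hne (by rw [hu x hx])
    · obtain ⟨x, hx, hne⟩ := h v
      exact hne (by rw [hv x hx, Sym2.eq_swap])
  · push Not
    rintro ⟨⟨w₁, hw₁, hw₁v⟩, ⟨w₂, hw₂, hw₂u⟩⟩ w
    obtain ⟨x, hx⟩ := hnbr w
    by_cases hwx : s(w, x) = s(u, v)
    · rcases Sym2.eq_iff.1 hwx with ⟨rfl, rfl⟩ | ⟨rfl, rfl⟩
      · exact ⟨w₁, hw₁, by simp [hw₁v, huv.ne]⟩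
      · exact ⟨w₂, hw₂, by simp [hw₂u, huv.ne']⟩
    · exact ⟨x, hx, hwx⟩

lemma isStarCenter_induce_iff {S : Set V} {c : V} (hc : c ∈ S) :
    (H.induce S).IsStarCenter ⟨c, hc⟩ ↔ ∀ a ∈ S, ∀ b ∈ S, H.Adj a b ↔ a ≠ b ∧ (a = c ∨ b = c) := by
  simp [IsStarCenter, Subtype.ext_iff]

namespace SimpleGraph.AllEdgesPendant

variable (hP : H.AllEdgesPendant)
include hP

lemma eq_or_adj_of_reachable {u c : V} (huc : H.Adj u c) (hu : ∀ w, H.Adj u w → w = c)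
    {x : V} (hx : H.Reachable c x) : x = c ∨ (H.Adj c x ∧ ∀ w, H.Adj x w → w = c) := by
  rw [reachable_iff_reflTransGen] at hx
  induction hx with
  | refl => exact .inl rfl
  | tail _ hyz ih =>
    rcases ih with rfl | ⟨-, hy⟩
    · refine .inr ⟨hyz, (hP hyz).elim (fun hc w hw => ?_) id⟩
      rw [← hc u huc.symm] at hw
      exact hu w hw
    · exact .inl (hy _ hyz)

lemma exists_center (hnbr : ∀ w, ∃ x, H.Adj w x) (x : V) :
    ∃ c, H.Reachable c x ∧ (∃ y, H.Adj c y) ∧ ∀ a b, H.Reachable c a → H.Reachable c b →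
      (H.Adj a b ↔ a ≠ b ∧ (a = c ∨ b = c)) := by
  obtain ⟨u, c, huc, hu, hcx⟩ : ∃ u c, H.Adj u c ∧ (∀ w, H.Adj u w → w = c) ∧ H.Reachable c x := by
    obtain ⟨y, hxy⟩ := hnbr x
    rcases hP hxy with hx | hy
    · exact ⟨x, y, hxy, hx, hxy.reachable.symm⟩
    · exact ⟨y, x, hxy.symm, hy, .rfl⟩
  refine ⟨c, hcx, ⟨u, huc.symm⟩, fun a b ha hb => ⟨fun hab => ⟨hab.ne, ?_⟩, ?_⟩⟩
  · rcases hP.eq_or_adj_of_reachable huc hu ha with rfl | ⟨-, ha⟩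
    · exact .inl rfl
    · exact .inr (ha b hab)
  · rintro ⟨hne, rfl | rfl⟩
    · exact ((hP.eq_or_adj_of_reachable huc hu hb).resolve_left hne.symm).1
    · exact ((hP.eq_or_adj_of_reachable huc hu ha).resolve_left hne).1.symm

lemma exists_isStarCenter (hnbr : ∀ w, ∃ x, H.Adj w x) (C : H.ConnectedComponent) :
    Nontrivial C.supp ∧ ∃ c, (H.induce C.supp).IsStarCenter c := by
  obtain ⟨x, rfl⟩ := C.exists_rep
  obtain ⟨c, hcx, ⟨y, hcy⟩, hadj⟩ := hP.exists_center hnbr x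
  have hc : c ∈ (H.connectedComponentMk x).supp := ConnectedComponent.eq.2 hcx
  have hy := ConnectedComponent.mem_supp_of_adj_mem_supp _ hc hcy
  refine ⟨nontrivial_of_ne ⟨c, hc⟩ ⟨y, hy⟩ (Subtype.coe_ne_coe.1 hcy.ne), ⟨c, hc⟩, ?_⟩
  refine (isStarCenter_induce_iff hc).2 fun a ha b hb => hadj a b ?_ ?_
  · exact ConnectedComponent.reachable_of_mem_supp _ hc ha
  · exact ConnectedComponent.reachable_of_mem_supp _ hc hb

end SimpleGraph.AllEdgesPendant

lemma SimpleGraph.AllEdgesPendant.not_connected {G : SimpleGraph V} (hP : Gᶜ.AllEdgesPendant)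
    (hnbr : ∀ w, ∃ x, Gᶜ.Adj w x) (hG : G.Connected) : ¬ Gᶜ.Connected := by
  intro hH
  obtain ⟨x⟩ := hG.nonempty
  obtain ⟨c, -, ⟨y, hcy⟩, hadj⟩ := hP.exists_center hnbr x
  have : Nontrivial V := ⟨⟨c, y, hcy.ne⟩⟩
  obtain ⟨z, hcz⟩ := hG.preconnected.exists_adj_of_nontrivial c
  have hcz' := (hadj c z (hH.preconnected c c) (hH.preconnected c z)).2 ⟨hcz.ne, .inl rfl⟩
  exact ((compl_adj G c z).1 hcz').2 hcz

lemma allEdgesPendant_of_isStarCenter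
    (h : ∀ C : H.ConnectedComponent, ∃ c, (H.induce C.supp).IsStarCenter c) :
    H.AllEdgesPendant := by
  intro u v huv
  obtain ⟨⟨c, hc⟩, hstar⟩ := h (H.connectedComponentMk u)
  rw [isStarCenter_induce_iff] at hstar
  have hu : u ∈ (H.connectedComponentMk u).supp := rfl
  have hv := ConnectedComponent.mem_supp_of_adj_mem_supp _ hu huv
  by_cases huc : u = c
  · refine .inr fun w hw => ?_
    have hw' := ConnectedComponent.mem_supp_of_adj_mem_supp _ hv hw
    rcases ((hstar v hv w hw').1 hw).2 with hvc | hwc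
    · exact absurd (huc.trans hvc.symm) huv.ne
    · exact hwc.trans huc.symm
  · refine .inl fun w hw => ?_
    have hw' := ConnectedComponent.mem_supp_of_adj_mem_supp _ hu hw
    rw [((hstar u hu w hw').1 hw).2.resolve_left huc,
      ((hstar u hu v hv).1 huv).2.resolve_left huc]

end Pendant

/-- A 2-self-centered graph is edge-maximal iff its complement is disconnected and each
connected component of the complement is a star K_{1,k} with k ≥ 1. -/
theorem stmt_4 [Fintype V] (G : SimpleGraph V) (h2sc : TwoSC G) :
    (∀ u v : V, u ≠ v → ¬ G.Adj u v →
        ¬ TwoSC (G ⊔ SimpleGraph.fromEdgeSet {s(u, v)})) ↔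
      (¬ Gᶜ.Connected ∧ ∀ C : Gᶜ.ConnectedComponent, ∃ k : ℕ, 1 ≤ k ∧
        Nonempty ((Gᶜ.induce C.supp) ≃g completeBipartiteGraph (Fin 1) (Fin k))) := by
  obtain ⟨hconn, -, hnbr⟩ := twoSC_iff.1 h2sc
  have hmaximal : (∀ u v : V, u ≠ v → ¬ G.Adj u v →
      ¬ TwoSC (G ⊔ fromEdgeSet {s(u, v)})) ↔ Gᶜ.AllEdgesPendant := by
    refine forall₂_congr fun u v => ?_
    rw [← and_imp, ← compl_adj]
    refine imp_congr_right fun huv => ?_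
    rw [h2sc.twoSC_iff_of_le le_sup_left, compl_sup_fromEdgeSet,
      forall_exists_adj_deleteEdges_iff hnbr huv, not_not]
  rw [hmaximal]
  refine ⟨fun hP => ⟨hP.not_connected hnbr hconn, fun C => ?_⟩, fun ⟨_, hstar⟩ => ?_⟩
  · obtain ⟨_, c, hc⟩ := hP.exists_isStarCenter hnbr C
    exact hc.exists_iso
  · refine allEdgesPendant_of_isStarCenter fun C => ?_
    obtain ⟨k, -, ⟨φ⟩⟩ := hstar C
    exact ⟨_, (isStarCenter_completeBipartiteGraph (Fin k)).comap_iso φ⟩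
end

section
/- If G is an edge-minimal 2-self-centered graph that contains no critical vertices (that is, no vertex x is the unique common neighbor of some pair of non-adjacent vertices u, v), then G is triangle-free. -/
/-!
If `a b c` is a triangle, deleting the edge `ab` keeps every pair of vertices at distance at
most 2: the pair `a, b` itself through `c`, and every non-adjacent pair because, having no
critical vertex, it has two common neighbours whose two paths are edge-disjoint. A spanning
subgraph cannot have smaller eccentricities, so `G - ab` is again 2-self-centered,
contradicting edge-minimality.
-/

open SimpleGraph

variable {V : Type*}

namespace SimpleGraph

variable {G H : SimpleGraph V}

lemma twoSC_iff_forall_ecc_eq_two [Fintype V] :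
    TwoSC G ↔ G.Connected ∧ ∀ v, ecc G v = 2 := by
  refine ⟨fun ⟨hG, hdiam, hrad⟩ => ⟨hG, fun v => le_antisymm ?_ ?_⟩, fun ⟨hG, hecc⟩ => ?_⟩
  · exact hdiam ▸ Finset.le_sup (f := ecc G) (Finset.mem_univ v)
  · exact hrad ▸ Nat.sInf_le ⟨v, rfl⟩
  · have : Nonempty V := hG.nonempty
    have hecc' : ecc G = fun _ => 2 := funext hecc
    refine ⟨hG, ?_, ?_⟩
    · rw [gdiam, hecc', Finset.sup_const Finset.univ_nonempty]
    · rw [grad, hecc', Set.range_const, csInf_singleton]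

lemma dist_le_ecc [Fintype V] (u v : V) : G.dist u v ≤ ecc G u :=
  Finset.le_sup (f := fun v => G.dist u v) (Finset.mem_univ v)

lemma TwoSC.exists_adj_adj [Fintype V] (hG : TwoSC G) {u v : V} (huv : u ≠ v)
    (hnadj : ¬G.Adj u v) : ∃ x, G.Adj u x ∧ G.Adj x v := by
  obtain ⟨hconn, hecc⟩ := twoSC_iff_forall_ecc_eq_two.mp hG
  have hdist : G.dist u v = 2 :=
    le_antisymm (hecc u ▸ dist_le_ecc u v) (hconn.one_lt_dist_of_ne_of_not_adj huv hnadj)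
  have hedist : G.edist u v = 2 := by
    rw [← (hconn u v).coe_dist_eq_edist, hdist]; rfl
  obtain ⟨x, hx⟩ := (edist_eq_two_iff.mp hedist).2.2
  exact ⟨x, (G.mem_commonNeighbors.mp hx).1, (G.mem_commonNeighbors.mp hx).2.symm⟩

lemma TwoSC.of_le [Fintype V] (hG : TwoSC G) (hle : H ≤ G)
    (hwalk : ∀ u v : V, ∃ p : H.Walk u v, p.length ≤ 2) : TwoSC H := by
  obtain ⟨hGconn, hGecc⟩ := twoSC_iff_forall_ecc_eq_two.mp hG
  have : Nonempty V := hGconn.nonempty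
  have hconn : H.Connected := (connected_iff H).mpr ⟨fun u v => ⟨(hwalk u v).choose⟩, ‹_›⟩
  refine twoSC_iff_forall_ecc_eq_two.mpr ⟨hconn, fun u => le_antisymm ?_ ?_⟩
  · refine Finset.sup_le fun v _ => ?_
    obtain ⟨p, hp⟩ := hwalk u v
    exact (dist_le p).trans hp
  · obtain ⟨v, -, hv⟩ := Finset.exists_mem_eq_sup Finset.univ Finset.univ_nonempty
      (fun v => G.dist u v)
    calc 2 = G.dist u v := (hGecc u).symm.trans hv
      _ ≤ H.dist u v := (hconn u v).dist_anti hle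
      _ ≤ ecc H u := dist_le_ecc u v

/-- The two paths `u - x - v` and `u - w - v` through distinct midpoints are edge-disjoint,
so deleting a single edge leaves one of them intact. -/
lemma exists_deleteEdges_adj_adj {u v x w : V} (hxw : x ≠ w) (hux : G.Adj u x)
    (hxv : G.Adj x v) (huw : G.Adj u w) (hwv : G.Adj w v) (e : Sym2 V) :
    ∃ y, (G.deleteEdges {e}).Adj u y ∧ (G.deleteEdges {e}).Adj y v := by
  simp only [deleteEdges_adj, Set.mem_singleton_iff]
  by_cases hxe : s(u, x) ≠ e ∧ s(x, v) ≠ e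
  · exact ⟨x, ⟨hux, hxe.1⟩, ⟨hxv, hxe.2⟩⟩
  · refine ⟨w, ⟨huw, ?_⟩, ⟨hwv, ?_⟩⟩ <;> rintro rfl <;>
      simp only [Sym2.eq_iff, not_and_or, not_not] at hxe <;>
      grind [hux.ne, hxv.ne, huw.ne, hwv.ne]

lemma Adj.exists_walk_deleteEdges_of_commonNeighbor {u v a b c : V} (huv : G.Adj u v)
    (hac : G.Adj a c) (hbc : G.Adj b c) :
    ∃ p : (G.deleteEdges {s(a, b)}).Walk u v, p.length ≤ 2 := by
  by_cases he : s(u, v) = s(a, b)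
  · have hca : c ≠ a := hac.ne.symm
    have hcb : c ≠ b := hbc.ne.symm
    have huc : (G.deleteEdges {s(a, b)}).Adj u c := by
      simp only [deleteEdges_adj, Set.mem_singleton_iff, Sym2.eq_iff] at he ⊢
      grind [G.adj_symm]
    have hcv : (G.deleteEdges {s(a, b)}).Adj c v := by
      simp only [deleteEdges_adj, Set.mem_singleton_iff, Sym2.eq_iff] at he ⊢
      grind [G.adj_symm]
    exact ⟨huc.toWalk.concat hcv, by simp⟩
  · exact ⟨(deleteEdges_adj.mpr ⟨huv, he⟩).toWalk, by simp⟩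

lemma TwoSC.deleteEdges_of_commonNeighbor [Fintype V] (hG : TwoSC G)
    (hnocrit : ∀ x u v : V, u ≠ v → ¬ G.Adj u v → G.Adj u x → G.Adj x v →
      ∃ w : V, w ≠ x ∧ G.Adj u w ∧ G.Adj w v)
    {a b c : V} (hac : G.Adj a c) (hbc : G.Adj b c) :
    TwoSC (G.deleteEdges {s(a, b)}) := by
  refine hG.of_le (G.deleteEdges_le _) fun u v => ?_
  by_cases huv : u = v
  · subst huv
    exact ⟨.nil, by simp⟩
  by_cases hadj : G.Adj u v
  · exact hadj.exists_walk_deleteEdges_of_commonNeighbor hac hbc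
  obtain ⟨x, hux, hxv⟩ := hG.exists_adj_adj huv hadj
  obtain ⟨w, hwx, huw, hwv⟩ := hnocrit x u v huv hadj hux hxv
  obtain ⟨y, huy, hyv⟩ := exists_deleteEdges_adj_adj hwx.symm hux hxv huw hwv s(a, b)
  exact ⟨huy.toWalk.concat hyv, by simp⟩

end SimpleGraph

/-- An edge-minimal 2-self-centered graph with no critical vertex for any pair of
non-adjacent vertices is triangle-free. -/
theorem stmt_8 [Fintype V] (G : SimpleGraph V)
    (h2sc : TwoSC G)
    (hmin : ∀ e ∈ G.edgeSet, ¬ TwoSC (G.deleteEdges {e}))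
    (hnocrit : ∀ x u v : V, u ≠ v → ¬ G.Adj u v → G.Adj u x → G.Adj x v →
      ∃ w : V, w ≠ x ∧ G.Adj u w ∧ G.Adj w v) :
    G.CliqueFree 3 := by
  classical
  intro t ht
  obtain ⟨a, b, c, hab, hac, hbc, -⟩ := is3Clique_iff.mp ht
  exact hmin s(a, b) hab (h2sc.deleteEdges_of_commonNeighbor hnocrit hac hbc)
end

section
/- Every triangle-free 2-self-centered graph is edge-minimal 2-self-centered: removing any edge yields a graph that is not 2-self-centered. -/
open SimpleGraph

variable {V : Type*}

/-! In a triangle-free graph an edge `ab` is the only path of length at most two from `a` to `b`: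
a common neighbour would close a triangle. So after deleting `ab` its endpoints are at distance at
least three, which a connected graph of diameter two does not allow. -/

lemma dist_le_gdiam [Fintype V] (G : SimpleGraph V) (u v : V) : G.dist u v ≤ gdiam G :=
  calc G.dist u v ≤ ecc G u := Finset.le_sup (f := fun w => G.dist u w) (Finset.mem_univ v)
    _ ≤ gdiam G := Finset.le_sup (f := fun w => ecc G w) (Finset.mem_univ u)

lemma SimpleGraph.CliqueFree.two_lt_edist_deleteEdges {G : SimpleGraph V} (htf : G.CliqueFree 3)
    {a b : V} (hab : G.Adj a b) : 2 < (G.deleteEdges {s(a, b)}).edist a b := by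
  refine two_lt_edist_iff.mpr ⟨hab.ne, by simp, Set.eq_empty_of_forall_notMem fun c hc => ?_⟩
  rw [mem_commonNeighbors] at hc
  obtain ⟨hac, hbc⟩ := hc
  classical
  exact htf _ (is3Clique_triple_iff.mpr ⟨hab, hac.1, hbc.1⟩)

theorem stmt_9_general [Fintype V] (G : SimpleGraph V)
    (htf : G.CliqueFree 3) :
    ∀ e ∈ G.edgeSet, ¬ TwoSC (G.deleteEdges {e}) := by
  intro e he ⟨hconn, hdiam, _⟩
  induction e using Sym2.ind with
  | _ a b =>
  have hfar : 2 < (G.deleteEdges {s(a, b)}).dist a b := by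
    exact_mod_cast (hconn a b).coe_dist_eq_edist ▸ htf.two_lt_edist_deleteEdges he
  have hclose := hdiam ▸ dist_le_gdiam (G.deleteEdges {s(a, b)}) a b
  omega

/-- Every triangle-free 2-self-centered graph is edge-minimal. -/
theorem stmt_9 [Fintype V] (G : SimpleGraph V)
    (htf : G.CliqueFree 3) (h2sc : TwoSC G) :
    ∀ e ∈ G.edgeSet, ¬ TwoSC (G.deleteEdges {e}) :=
  stmt_9_general G htf
end

section
/- Let G be a graph constructed as in Definition GCB from a triangle-free graph X with independent sets A_1,...,A_r, B_1,...,B_s: vertex classes K, L, Y = {y_1,...,y_r}, Z = {z_1,...,z_s}, V(X), with K complete to L ∪ Y, L complete to K ∪ Z, y_i adjacent to A_i, z_j adjacent to B_j, and y_i ~ z_j iff A_i ∩ B_j = ∅, with no other edges besides those of X. Then G is triangle-free. -/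
/-!
A graph is triangle-free as soon as every neighbourhood is independent, so it suffices to
check the neighbourhood of each kind of vertex. The neighbourhoods of vertices of `K` and `L`
lie in `L ∪ Y` and `K ∪ Z`, which span no edges. The neighbourhood of `y_i` is
`K ∪ A_i ∪ {z_j | A_i ∩ B_j = ∅}`: `A_i` is independent, and `z_j` has no neighbour in `A_i`
because its neighbours in `X` lie in `B_j`. Symmetrically for `z_j`. Finally, for `x ∈ V(X)`:
neighbours `y_i, z_j` of `x` would put `x` in `A_i ∩ B_j`; a neighbour `y_i` and an
`X`-neighbour `x'` of `x` are adjacent only if `x, x' ∈ A_i`, against independence; and two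
`X`-neighbours of `x` are non-adjacent since `X` is triangle-free.
-/

open SimpleGraph

variable {K L VX : Type*} {r s : ℕ}

/-- Vertex set of the generalized complete bipartite graph: K ∪ L ∪ Y ∪ Z ∪ V(X),
with Y = {y_1, ..., y_r} and Z = {z_1, ..., z_s}. -/
abbrev GCBVert (K L VX : Type*) (r s : ℕ) : Type _ := K ⊕ L ⊕ Fin r ⊕ Fin s ⊕ VX

/-- The vertex y_i. -/
def yV (K L VX : Type*) (s : ℕ) {r : ℕ} (i : Fin r) : GCBVert K L VX r s :=
  Sum.inr (Sum.inr (Sum.inl i))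

/-- The vertex z_j. -/
def zV (K L VX : Type*) (r : ℕ) {s : ℕ} (j : Fin s) : GCBVert K L VX r s :=
  Sum.inr (Sum.inr (Sum.inr (Sum.inl j)))

/-- The vertex of G corresponding to a vertex x of X. -/
def xV (K L : Type*) (r s : ℕ) {VX : Type*} (x : VX) : GCBVert K L VX r s :=
  Sum.inr (Sum.inr (Sum.inr (Sum.inr x)))

/-- One-directional edge relation of GCB_X(k, ℓ, A, B): K is complete to L ∪ Y, L is
complete to K ∪ Z, y_i is adjacent to A_i, z_j is adjacent to B_j, y_i ~ z_j iff
A_i ∩ B_j = ∅, and X keeps its own edges; there are no other edges. -/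
def gcbRel (X : SimpleGraph VX) (A : Fin r → Set VX) (B : Fin s → Set VX) :
    GCBVert K L VX r s → GCBVert K L VX r s → Prop
  | Sum.inl _, Sum.inr (Sum.inl _) => True                                  -- K–L
  | Sum.inl _, Sum.inr (Sum.inr (Sum.inl _)) => True                        -- K–Y
  | Sum.inr (Sum.inl _), Sum.inr (Sum.inr (Sum.inr (Sum.inl _))) => True    -- L–Z
  | Sum.inr (Sum.inr (Sum.inl i)), Sum.inr (Sum.inr (Sum.inr (Sum.inr x))) => x ∈ A i  -- y_i–A_i
  | Sum.inr (Sum.inr (Sum.inr (Sum.inl j))), Sum.inr (Sum.inr (Sum.inr (Sum.inr x))) => x ∈ B j  -- z_j–B_j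
  | Sum.inr (Sum.inr (Sum.inl i)), Sum.inr (Sum.inr (Sum.inr (Sum.inl j))) => A i ∩ B j = ∅  -- y_i–z_j
  | Sum.inr (Sum.inr (Sum.inr (Sum.inr x))), Sum.inr (Sum.inr (Sum.inr (Sum.inr x'))) => X.Adj x x'  -- X
  | _, _ => False

/-- The generalized complete bipartite graph GCB_X(k, ℓ, A, B). -/
def GCB (X : SimpleGraph VX) (A : Fin r → Set VX) (B : Fin s → Set VX)
    (K L : Type*) : SimpleGraph (GCBVert K L VX r s) :=
  SimpleGraph.fromRel (gcbRel X A B)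

namespace SimpleGraph

variable {α : Type*} {G : SimpleGraph α}

theorem IsIndepSet.not_adj {s : Set α} (h : G.IsIndepSet s) {v w : α} (hv : v ∈ s) (hw : w ∈ s) :
    ¬ G.Adj v w :=
  fun hvw => h hv hw hvw.ne hvw

theorem cliqueFree_three_of_isIndepSet_neighborSet (h : ∀ v, G.IsIndepSet (G.neighborSet v)) :
    G.CliqueFree 3 := by
  classical
  intro t ht
  obtain ⟨a, b, c, hab, hac, hbc, -⟩ := is3Clique_iff.mp ht
  exact (h a).not_adj hab hac hbc

end SimpleGraph

namespace GCB

variable {X : SimpleGraph VX} {A : Fin r → Set VX} {B : Fin s → Set VX} {K L : Type*}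

theorem isIndepSet_neighborSet_inl (k : K) :
    (GCB X A B K L).IsIndepSet ((GCB X A B K L).neighborSet (Sum.inl k)) := by
  rintro (u | u | u | u | u) hu (w | w | w | w | w) hw - huw <;>
    simp_all [GCB, gcbRel]

theorem isIndepSet_neighborSet_inr_inl (l : L) :
    (GCB X A B K L).IsIndepSet ((GCB X A B K L).neighborSet (Sum.inr (Sum.inl l))) := by
  rintro (u | u | u | u | u) hu (w | w | w | w | w) hw - huw <;>
    simp_all [GCB, gcbRel]

theorem isIndepSet_neighborSet_yV (hA : ∀ i, X.IsIndepSet (A i)) (i : Fin r) :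
    (GCB X A B K L).IsIndepSet ((GCB X A B K L).neighborSet (yV K L VX s i)) := by
  have hAi : ∀ u ∈ A i, ∀ w ∈ A i, ¬ X.Adj u w := fun _ hu _ hw => (hA i).not_adj hu hw
  rintro (u | u | u | u | u) hu (w | w | w | w | w) hw - huw <;>
    simp_all [GCB, gcbRel, yV, ← Set.disjoint_iff_inter_eq_empty, Set.disjoint_left]

theorem isIndepSet_neighborSet_zV (hB : ∀ j, X.IsIndepSet (B j)) (j : Fin s) :
    (GCB X A B K L).IsIndepSet ((GCB X A B K L).neighborSet (zV K L VX r j)) := by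
  have hBj : ∀ u ∈ B j, ∀ w ∈ B j, ¬ X.Adj u w := fun _ hu _ hw => (hB j).not_adj hu hw
  rintro (u | u | u | u | u) hu (w | w | w | w | w) hw - huw <;>
    simp_all [GCB, gcbRel, zV, ← Set.disjoint_iff_inter_eq_empty, Set.disjoint_right]

theorem isIndepSet_neighborSet_xV (hX : X.CliqueFree 3) (hA : ∀ i, X.IsIndepSet (A i))
    (hB : ∀ j, X.IsIndepSet (B j)) (x : VX) :
    (GCB X A B K L).IsIndepSet ((GCB X A B K L).neighborSet (xV K L r s x)) := by
  have hA' : ∀ i, ∀ u ∈ A i, ∀ w ∈ A i, ¬ X.Adj u w := fun i _ hu _ hw => (hA i).not_adj hu hw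
  have hB' : ∀ j, ∀ u ∈ B j, ∀ w ∈ B j, ¬ X.Adj u w := fun j _ hu _ hw => (hB j).not_adj hu hw
  have hNx : ∀ u w, X.Adj x u → X.Adj x w → ¬ X.Adj u w := fun _ _ hu hw =>
    (X.isIndepSet_neighborSet_of_triangleFree hX x).not_adj hu hw
  rintro (u | u | u | u | u) hu (w | w | w | w | w) hw - huw <;>
    simp_all [GCB, gcbRel, xV, X.adj_comm, ← Set.disjoint_iff_inter_eq_empty, Set.disjoint_left]
  all_goals aesop

end GCB

/-- Any generalized complete bipartite graph built from a triangle-free graph X and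
independent sets A_1, ..., A_r, B_1, ..., B_s is triangle-free. -/
theorem stmt_19 (X : SimpleGraph VX) (A : Fin r → Set VX) (B : Fin s → Set VX)
    (K L : Type*)
    (htf : X.CliqueFree 3)
    (hAind : ∀ i, (A i).Pairwise fun x y => ¬ X.Adj x y)
    (hBind : ∀ j, (B j).Pairwise fun x y => ¬ X.Adj x y) :
    (GCB X A B K L).CliqueFree 3 := by
  refine cliqueFree_three_of_isIndepSet_neighborSet fun v => ?_
  rcases v with k | l | i | j | x
  · exact GCB.isIndepSet_neighborSet_inl k
  · exact GCB.isIndepSet_neighborSet_inr_inl l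
  · exact GCB.isIndepSet_neighborSet_yV hAind i
  · exact GCB.isIndepSet_neighborSet_zV hBind j
  · exact GCB.isIndepSet_neighborSet_xV htf hAind hBind x
end
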